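/- arXiv:1209.5052 — 2 statements merged into one kernel-verified Lean document; each statement's English description precedes it below -/
import Mathlib

section
/- Let G be a graph and G' = G ⓡ 𝓗 the non-uniform replacement product of G with a proper d-regular graph family 𝓗 (d ≥ 3). If S ⊆ V(G) has conductance φ(S) ≤ φ in G, then the set S' := {(u,i) ∈ V(G') : u ∈ S, 1 ≤ i ≤ deg_G(u)} satisfies |S'| = vol_G(S) and φ_{G'}(S') ≤ φ/2. -/
/-!
Every vertex of `G ⓡ 𝓗` has degree `2d` (`d` inside its cloud, `d` along the rotation map), so
`vol(S') = 2d · |S'| = 2d · vol_G(S)`. An edge leaving `S'` cannot lie inside a cloud, hence is one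
of the `d` parallel copies of an edge of `G` leaving `S`: `e(S', S'ᶜ) = d · e_G(S, Sᶜ)`.
The conductance therefore drops by the factor `d / 2d = 1/2`.
-/

open Finset

section ReplacementProduct

variable {V : Type*} [Fintype V] [DecidableEq V] (G : SimpleGraph V) [DecidableRel G.Adj]

/-- Vertices of the non-uniform replacement product: a cloud `Fin (deg u)` per vertex `u`. -/
abbrev RPVert := Σ u : V, Fin (G.degree u)

/-- Adjacency-count matrix of the non-uniform replacement product `G ⓡ 𝓗`:
inside the cloud of `u` the edges of `H_u`, plus `d` parallel edges following
the rotation map `rot`. -/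
def rpAdj (d : ℕ) (H : ∀ u : V, Matrix (Fin (G.degree u)) (Fin (G.degree u)) ℕ)
    (rot : RPVert G → RPVert G) (x y : RPVert G) : ℕ :=
  (if h : x.1 = y.1 then H x.1 x.2 (Fin.cast (show G.degree y.1 = G.degree x.1 by rw [h]) y.2) else 0)
    + d * (if rot x = y then 1 else 0)

/-- Number of edges of `G` from `S` to `T`. -/
def eG (S T : Finset V) : ℕ := ∑ u ∈ S, ∑ v ∈ T, (if G.Adj u v then 1 else 0)

/-- Volume of `S` in `G`. -/
def volG (S : Finset V) : ℕ := ∑ u ∈ S, G.degree u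

/-- Number of edges of `G ⓡ 𝓗` (counted with multiplicity) from `X` to `Y`. -/
def eRP (d : ℕ) (H : ∀ u : V, Matrix (Fin (G.degree u)) (Fin (G.degree u)) ℕ)
    (rot : RPVert G → RPVert G) (X Y : Finset (RPVert G)) : ℕ :=
  ∑ x ∈ X, ∑ y ∈ Y, rpAdj G d H rot x y

/-- Volume of `X` in `G ⓡ 𝓗`. -/
def volRP (d : ℕ) (H : ∀ u : V, Matrix (Fin (G.degree u)) (Fin (G.degree u)) ℕ)
    (rot : RPVert G → RPVert G) (X : Finset (RPVert G)) : ℕ :=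
  ∑ x ∈ X, ∑ y, rpAdj G d H rot x y

end ReplacementProduct


section Conductance

variable {V : Type*} [Fintype V] [DecidableEq V] {G : SimpleGraph V} [DecidableRel G.Adj]
  {d : ℕ} {H : ∀ u : V, Matrix (Fin (G.degree u)) (Fin (G.degree u)) ℕ}
  {rot : RPVert G → RPVert G}

theorem card_filter_fst_mem (S : Finset V) :
    (univ.filter fun x : RPVert G => x.1 ∈ S).card = volG G S := by
  have : (univ.filter fun x : RPVert G => x.1 ∈ S) = S.sigma fun _ => univ := by
    ext; simp
  rw [this, card_sigma, volG]
  simp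

theorem sum_rpAdj_eq_two_mul (hHreg : ∀ u i, ∑ j, H u i j = d) (x : RPVert G) :
    ∑ y, rpAdj G d H rot x y = 2 * d := by
  have hcloud : ∑ y : RPVert G, (if h : x.1 = y.1 then
      H x.1 x.2 (Fin.cast (show G.degree y.1 = G.degree x.1 by rw [h]) y.2) else 0) = d := by
    rw [← univ_sigma_univ, sum_sigma, sum_eq_single x.1]
    · simpa using hHreg x.1 x.2
    · intro u _ hu
      exact sum_eq_zero fun j _ => dif_neg (Ne.symm hu)
    · simp
  have hrot : ∑ y : RPVert G, d * (if rot x = y then 1 else 0) = d := by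
    simp
  simp only [rpAdj, sum_add_distrib, hcloud, hrot]
  ring

theorem volRP_eq_two_mul_card (hHreg : ∀ u i, ∑ j, H u i j = d) (X : Finset (RPVert G)) :
    volRP G d H rot X = 2 * d * X.card := by
  simp only [volRP, sum_rpAdj_eq_two_mul hHreg, sum_const, smul_eq_mul, mul_comm]

theorem rpAdj_of_fst_ne {x y : RPVert G} (h : x.1 ≠ y.1) :
    rpAdj G d H rot x y = d * if rot x = y then 1 else 0 := by
  rw [rpAdj, dif_neg h, zero_add]

theorem sum_rot_fst_mem_eq_sum_adj
    (hcount : ∀ u v : V,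
      ((univ.filter fun i : Fin (G.degree u) => (rot ⟨u, i⟩).fst = v).card)
        = if G.Adj u v then 1 else 0)
    (u : V) (T : Finset V) :
    ∑ i : Fin (G.degree u), (if (rot ⟨u, i⟩).1 ∈ T then 1 else 0)
      = ∑ v ∈ T, if G.Adj u v then 1 else 0 := by
  calc ∑ i : Fin (G.degree u), (if (rot ⟨u, i⟩).1 ∈ T then 1 else 0)
      = ∑ i : Fin (G.degree u), ∑ v ∈ T, (if (rot ⟨u, i⟩).1 = v then 1 else 0) := by
        simp only [sum_ite_eq]
    _ = ∑ v ∈ T, ∑ i : Fin (G.degree u), (if (rot ⟨u, i⟩).1 = v then 1 else 0) := sum_comm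
    _ = ∑ v ∈ T, if G.Adj u v then 1 else 0 := by
        simp only [← hcount, card_filter]

theorem eRP_filter_fst_mem_compl
    (hcount : ∀ u v : V,
      ((univ.filter fun i : Fin (G.degree u) => (rot ⟨u, i⟩).fst = v).card)
        = if G.Adj u v then 1 else 0)
    (S : Finset V) (S' : Finset (RPVert G)) (hS' : S' = univ.filter fun x => x.1 ∈ S) :
    eRP G d H rot S' S'ᶜ = d * eG G S Sᶜ := by
  have hmem : ∀ x, x ∈ S' ↔ x.1 ∈ S := by simp [hS']
  have hrow : ∀ x ∈ S', ∑ y ∈ S'ᶜ, rpAdj G d H rot x y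
      = d * if (rot x).1 ∈ Sᶜ then 1 else 0 := by
    intro x hx
    have hacross : ∀ y ∈ S'ᶜ, rpAdj G d H rot x y = d * if rot x = y then 1 else 0 := by
      intro y hy
      refine rpAdj_of_fst_ne fun h => ?_
      simp only [mem_compl, hmem, ← h] at hy
      exact hy ((hmem x).1 hx)
    simp [sum_congr rfl hacross, hmem]
  have hsigma : S' = S.sigma fun _ => univ := by
    ext; simp [hmem]
  rw [eRP, sum_congr rfl hrow, hsigma, sum_sigma, eG, mul_sum]
  refine sum_congr rfl fun u _ => ?_
  rw [← mul_sum, sum_rot_fst_mem_eq_sum_adj hcount]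

end Conductance

theorem replacement_product_small_conductance_general
    {V : Type*} [Fintype V] [DecidableEq V]
    (G : SimpleGraph V) [DecidableRel G.Adj]
    (d : ℕ)
    (H : ∀ u : V, Matrix (Fin (G.degree u)) (Fin (G.degree u)) ℕ)
    (hHreg : ∀ u i, ∑ j, H u i j = d)
    (rot : RPVert G → RPVert G)
    (hcount : ∀ u v : V,
      ((Finset.univ.filter fun i : Fin (G.degree u) => (rot ⟨u, i⟩).fst = v).card)
        = if G.Adj u v then 1 else 0)
    (φ : ℝ) (S : Finset V)
    (hS : (eG G S Sᶜ : ℝ) ≤ φ * volG G S)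
    (S' : Finset (RPVert G))
    (hS' : S' = Finset.univ.filter fun x : RPVert G => x.1 ∈ S) :
    S'.card = volG G S ∧
      (eRP G d H rot S' S'ᶜ : ℝ) ≤ (φ / 2) * volRP G d H rot S' := by
  have hcard : S'.card = volG G S := hS' ▸ card_filter_fst_mem S
  refine ⟨hcard, ?_⟩
  rw [eRP_filter_fst_mem_compl hcount S S' hS', volRP_eq_two_mul_card hHreg, hcard]
  push_cast
  calc (d : ℝ) * eG G S Sᶜ ≤ d * (φ * volG G S) := by gcongr
    _ = φ / 2 * (2 * d * volG G S) := by ring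

/-- If `S ⊆ V(G)` has conductance `φ(S) ≤ φ` in `G`, i.e. `e(S, V∖S) ≤ φ·vol(S)`,
then in the non-uniform replacement product `G' = G ⓡ 𝓗` (with `𝓗` a proper
`d`-regular graph family, `d ≥ 3`), the blown-up set
`S' = {(u,i) : u ∈ S, 1 ≤ i ≤ deg_G(u)}` satisfies `|S'| = vol_G(S)` and
`φ_{G'}(S') ≤ φ/2`, i.e. `e_{G'}(S', complement) ≤ (φ/2)·vol_{G'}(S')`. -/
theorem replacement_product_small_conductance
    {V : Type*} [Fintype V] [DecidableEq V]
    (G : SimpleGraph V) [DecidableRel G.Adj]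
    (d : ℕ) (hd : 3 ≤ d)
    (H : ∀ u : V, Matrix (Fin (G.degree u)) (Fin (G.degree u)) ℕ)
    (hHsymm : ∀ u i j, H u i j = H u j i)
    (hHreg : ∀ u i, ∑ j, H u i j = d)
    (rot : RPVert G → RPVert G)
    (hrot : Function.Involutive rot)
    (hcount : ∀ u v : V,
      ((Finset.univ.filter fun i : Fin (G.degree u) => (rot ⟨u, i⟩).fst = v).card)
        = if G.Adj u v then 1 else 0)
    (φ : ℝ) (S : Finset V)
    (hS : (eG G S Sᶜ : ℝ) ≤ φ * volG G S)
    (S' : Finset (RPVert G))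
    (hS' : S' = Finset.univ.filter fun x : RPVert G => x.1 ∈ S) :
    S'.card = volG G S ∧
      (eRP G d H rot S' S'ᶜ : ℝ) ≤ (φ / 2) * volRP G d H rot S' :=
  replacement_product_small_conductance_general G d H hHreg rot hcount φ S hS S' hS'
end

section
/- If W_{G'} = (1/2)((I+R_G)/2 + δJ_𝓗 + (1−δ)B_𝓗) where R_G is symmetric (a permutation matrix of an involution), J_𝓗 and B_𝓗 are symmetric with η₁(B_𝓗) ≤ 1, and all terms are contractions in spectral norm, then W_{G'}³ can be written as (1 − δ²/8)·B + (δ²/8)·P for some symmetric matrix B with η₁(B) ≤ 1, where P := (1/2)J_𝓗(I + R_G)J_𝓗. Consequently η_j(W_{G'}³) ≤ 1 − δ²/8 + (δ²/8)·η_j(P) for all j. -/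
/-!
Write `W' = X + Y + Z` with `X = (1 + R)/4`, `Y = δJ/2`, `Z = (1 - δ)B/2`, of spectral norms at
most `1/2`, `δ/2`, `(1 - δ)/2`. In the expansion of `W'³` the word `YXY = (δ²/8)P` is set apart
and the other 26 words regroup into six products whose norms add up to at most `1 - δ²/8`, so
`B' := (W'³ - (δ²/8)P)/(1 - δ²/8)` is a symmetric contraction. The eigenvalue bound is then
Weyl's inequality, proved Courant–Fischer style: the span of the top `j + 1` eigenvectors of `W'³`
meets the span of the bottom `n - j` eigenvectors of `P` in a nonzero vector.
-/

/-- `f (Tuple.sort f (Fin.rev j))` is the `j`-th largest value of `f`. -/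
noncomputable def kthLargest {n : ℕ} (f : Fin n → ℝ) (j : Fin n) : ℝ :=
  f (Tuple.sort f (Fin.rev j))

open Module Submodule
open scoped RealInnerProductSpace

namespace OrthonormalBasis

variable {ι E : Type*} [Fintype ι] [NormedAddCommGroup E] [InnerProductSpace ℝ E]
  (b : OrthonormalBasis ι ℝ E) {T : E →ₗ[ℝ] E} {μ : ι → ℝ}

theorem inner_map_of_apply_eq_smul (hT : ∀ i, T (b i) = μ i • b i) (x : E) (i : ι) :
    ⟪b i, T x⟫ = μ i * ⟪b i, x⟫ := by
  classical
  conv_lhs => rw [← b.sum_repr' x]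
  simp [map_sum, hT, inner_sum, inner_smul_right, orthonormal_iff_ite.mp b.orthonormal, mul_comm]

theorem inner_map_self_eq_sum (hT : ∀ i, T (b i) = μ i • b i) (x : E) :
    ⟪x, T x⟫ = ∑ i, μ i * ⟪b i, x⟫ ^ 2 := by
  rw [← b.sum_inner_mul_inner]
  refine Finset.sum_congr rfl fun i _ => ?_
  rw [b.inner_map_of_apply_eq_smul hT, real_inner_comm]
  ring

theorem inner_map_self_le (hT : ∀ i, T (b i) = μ i • b i) {c : ℝ} {x : E}
    (h : ∀ i, ⟪b i, x⟫ ≠ 0 → μ i ≤ c) : ⟪x, T x⟫ ≤ c * ‖x‖ ^ 2 := by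
  rw [b.inner_map_self_eq_sum hT, ← b.sum_sq_inner_right, Finset.mul_sum]
  refine Finset.sum_le_sum fun i _ => ?_
  by_cases hi : ⟪b i, x⟫ = 0
  · simp [hi]
  · exact mul_le_mul_of_nonneg_right (h i hi) (sq_nonneg _)

theorem le_inner_map_self (hT : ∀ i, T (b i) = μ i • b i) {c : ℝ} {x : E}
    (h : ∀ i, ⟪b i, x⟫ ≠ 0 → c ≤ μ i) : c * ‖x‖ ^ 2 ≤ ⟪x, T x⟫ := by
  have := b.inner_map_self_le (T := -T) (μ := -μ) (by simp [hT]) (c := -c)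
    fun i hi => neg_le_neg (h i hi)
  simp only [LinearMap.neg_apply, inner_neg_right] at this
  linarith

theorem norm_map_le (hT : ∀ i, T (b i) = μ i • b i) {c : ℝ} (hc : 0 ≤ c)
    (h : ∀ i, |μ i| ≤ c) (x : E) : ‖T x‖ ≤ c * ‖x‖ := by
  refine pow_le_pow_iff_left₀ (norm_nonneg _) (by positivity) two_ne_zero |>.mp ?_
  rw [mul_pow, ← b.sum_sq_inner_right, ← b.sum_sq_inner_right, Finset.mul_sum]
  refine Finset.sum_le_sum fun i _ => ?_
  rw [b.inner_map_of_apply_eq_smul hT, mul_pow, ← sq_abs (μ i)]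
  gcongr
  exact h i

theorem mem_of_mem_span_image_of_inner_ne_zero {s : Set ι} {x : E}
    (hx : x ∈ span ℝ (b '' s)) {i : ι} (hi : ⟪b i, x⟫ ≠ 0) : i ∈ s := by
  rw [← b.coe_toBasis, b.toBasis.mem_span_image] at hx
  exact hx (by simpa [b.coe_toBasis_repr_apply, b.repr_apply_apply] using hi)

theorem finrank_span_image (s : Finset ι) : finrank ℝ (span ℝ (b '' s)) = s.card := by
  rw [Set.image_eq_range, ← Fintype.card_coe s]
  exact finrank_span_eq_card (b.orthonormal.linearIndependent.comp _ Subtype.coe_injective)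

end OrthonormalBasis

theorem Submodule.exists_mem_inf_ne_zero_of_finrank_lt {K V : Type*} [DivisionRing K]
    [AddCommGroup V] [Module K V] [FiniteDimensional K V] (s t : Submodule K V)
    (h : finrank K V < finrank K s + finrank K t) : ∃ x ∈ s ⊓ t, x ≠ 0 := by
  refine exists_mem_ne_zero_of_ne_bot fun hbot => ?_
  have := finrank_sup_add_finrank_inf_eq s t
  rw [hbot, finrank_bot] at this
  have := (s ⊔ t).finrank_le
  omega

section CourantFischer

variable {n : ℕ} {E : Type*} [NormedAddCommGroup E] [InnerProductSpace ℝ E]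
  {T : E →ₗ[ℝ] E} {μ : Fin n → ℝ}

theorem OrthonormalBasis.exists_finrank_eq_kthLargest_mul_le (b : OrthonormalBasis (Fin n) ℝ E)
    (hT : ∀ i, T (b i) = μ i • b i) (j : Fin n) :
    ∃ V : Submodule ℝ E, finrank ℝ V = j + 1 ∧
      ∀ x ∈ V, kthLargest μ j * ‖x‖ ^ 2 ≤ ⟪x, T x⟫ := by
  classical
  let s := (Finset.Ici j.rev).image (Tuple.sort μ)
  refine ⟨span ℝ (b '' s), ?_, fun x hx => b.le_inner_map_self hT fun i hi => ?_⟩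
  · rw [b.finrank_span_image, Finset.card_image_of_injective _ (Tuple.sort μ).injective,
      Fin.card_Ici, Fin.val_rev]
    omega
  · obtain ⟨k, hk, rfl⟩ := Finset.mem_image.mp (b.mem_of_mem_span_image_of_inner_ne_zero hx hi)
    exact Tuple.monotone_sort μ (Finset.mem_Ici.mp hk)

theorem OrthonormalBasis.exists_finrank_eq_mul_kthLargest_le (b : OrthonormalBasis (Fin n) ℝ E)
    (hT : ∀ i, T (b i) = μ i • b i) (j : Fin n) :
    ∃ V : Submodule ℝ E, finrank ℝ V = n - j ∧
      ∀ x ∈ V, ⟪x, T x⟫ ≤ kthLargest μ j * ‖x‖ ^ 2 := by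
  classical
  let s := (Finset.Iic j.rev).image (Tuple.sort μ)
  refine ⟨span ℝ (b '' s), ?_, fun x hx => b.inner_map_self_le hT fun i hi => ?_⟩
  · rw [b.finrank_span_image, Finset.card_image_of_injective _ (Tuple.sort μ).injective,
      Fin.card_Iic, Fin.val_rev]
    omega
  · obtain ⟨k, hk, rfl⟩ := Finset.mem_image.mp (b.mem_of_mem_span_image_of_inner_ne_zero hx hi)
    exact Tuple.monotone_sort μ (Finset.mem_Iic.mp hk)

theorem kthLargest_le_of_inner_map_self_le {S : E →ₗ[ℝ] E} {ν : Fin n → ℝ}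
    (b b' : OrthonormalBasis (Fin n) ℝ E) (hS : ∀ i, S (b i) = ν i • b i)
    (hT : ∀ i, T (b' i) = μ i • b' i) {t c : ℝ} (ht : 0 ≤ t)
    (h : ∀ x, ⟪x, S x⟫ ≤ t * ⟪x, T x⟫ + c * ‖x‖ ^ 2) (j : Fin n) :
    kthLargest ν j ≤ t * kthLargest μ j + c := by
  obtain ⟨V, hV, hSV⟩ := b.exists_finrank_eq_kthLargest_mul_le hS j
  obtain ⟨W, hW, hTW⟩ := b'.exists_finrank_eq_mul_kthLargest_le hT j
  have : FiniteDimensional ℝ E := b.toBasis.finiteDimensional_of_finite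
  obtain ⟨x, ⟨hxV, hxW⟩, hx⟩ := V.exists_mem_inf_ne_zero_of_finrank_lt W (by
    rw [finrank_eq_card_basis b.toBasis, Fintype.card_fin, hV, hW]
    omega)
  have hx2 : 0 < ‖x‖ ^ 2 := by positivity
  refine le_of_mul_le_mul_right ?_ hx2
  calc kthLargest ν j * ‖x‖ ^ 2 ≤ ⟪x, S x⟫ := hSV x hxV
    _ ≤ t * ⟪x, T x⟫ + c * ‖x‖ ^ 2 := h x
    _ ≤ t * (kthLargest μ j * ‖x‖ ^ 2) + c * ‖x‖ ^ 2 := by gcongr; exact hTW x hxW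
    _ = (t * kthLargest μ j + c) * ‖x‖ ^ 2 := by ring

end CourantFischer

open scoped Matrix.Norms.L2Operator

namespace Matrix

variable {ι : Type*} [Fintype ι] [DecidableEq ι]

theorem l2_opNorm_le_one_of_conjTranspose_mul_self_eq_one {𝕜 : Type*} [RCLike 𝕜]
    {A : Matrix ι ι 𝕜} (h : Aᴴ * A = 1) : ‖A‖ ≤ 1 := by
  have hA := l2_opNorm_conjTranspose_mul_self A
  have h1 := l2_opNorm_conjTranspose_mul_self (1 : Matrix ι ι 𝕜)
  rw [h] at hA
  rw [conjTranspose_one, one_mul] at h1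
  have : ‖(1 : Matrix ι ι 𝕜)‖ ≤ 1 := by nlinarith [norm_nonneg (1 : Matrix ι ι 𝕜)]
  nlinarith [norm_nonneg A]

namespace IsHermitian

theorem toEuclideanLin_eigenvectorBasis {A : Matrix ι ι ℝ} (hA : A.IsHermitian) (i : ι) :
    toEuclideanLin A (hA.eigenvectorBasis i) = hA.eigenvalues i • hA.eigenvectorBasis i := by
  ext j
  simpa using congrFun (hA.mulVec_eigenvectorBasis i) j

theorem l2_opNorm_le {A : Matrix ι ι ℝ} (hA : A.IsHermitian) {c : ℝ} (hc : 0 ≤ c)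
    (h : ∀ i, |hA.eigenvalues i| ≤ c) : ‖A‖ ≤ c :=
  ContinuousLinearMap.opNorm_le_bound _ hc
    (hA.eigenvectorBasis.norm_map_le hA.toEuclideanLin_eigenvectorBasis hc h)

theorem eigenvalues_le_l2_opNorm {A : Matrix ι ι ℝ} (hA : A.IsHermitian) (i : ι) :
    hA.eigenvalues i ≤ ‖A‖ := by
  have := A.l2_opNorm_mulVec (hA.eigenvectorBasis i)
  rw [show (EuclideanSpace.equiv ι ℝ).symm (A *ᵥ hA.eigenvectorBasis i) = _ from
    hA.toEuclideanLin_eigenvectorBasis i, norm_smul, hA.eigenvectorBasis.orthonormal.1 i,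
    Real.norm_eq_abs, mul_one, mul_one] at this
  exact (le_abs_self _).trans this

end IsHermitian

end Matrix

theorem norm_add_add_pow_three_sub_mul_mul_le {A : Type*} [NormedRing A] {X Y Z : A}
    {a b c : ℝ} (hX : ‖X‖ ≤ a) (hY : ‖Y‖ ≤ b) (hZ : ‖Z‖ ≤ c) (habc : a + b + c = 1) :
    ‖(X + Y + Z) ^ 3 - Y * X * Y‖ ≤ 1 - a * b ^ 2 := by
  set W := X + Y + Z
  have hW : ‖W‖ ≤ 1 := habc ▸ (norm_add₃_le ..).trans (by gcongr)
  -- the 26 other words of length three, grouped by their shortest prefix that is not a prefix of `YXY`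
  have expand : W ^ 3 - Y * X * Y =
      X * W * W + Z * W * W + Y * Y * W + Y * Z * W + Y * X * X + Y * X * Z := by
    simp only [W]
    noncomm_ring
  have bound {U V U' : A} {u v u' : ℝ} (hU : ‖U‖ ≤ u) (hV : ‖V‖ ≤ v) (hU' : ‖U'‖ ≤ u') :
      ‖U * V * U'‖ ≤ u * v * u' :=
    (norm_mul₃_le ..).trans <| mul_le_mul (mul_le_mul hU hV (norm_nonneg _)
      ((norm_nonneg _).trans hU)) hU' (norm_nonneg _)
      (mul_nonneg ((norm_nonneg _).trans hU) ((norm_nonneg _).trans hV))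
  obtain rfl : c = 1 - a - b := by linarith
  calc ‖W ^ 3 - Y * X * Y‖
      ≤ a * 1 * 1 + (1 - a - b) * 1 * 1 + b * b * 1 + b * (1 - a - b) * 1 + b * a * a
          + b * a * (1 - a - b) := by
        rw [expand]
        repeat' apply norm_add_le_of_le
        all_goals apply bound <;> assumption
    _ = 1 - a * b ^ 2 := by ring

namespace Matrix.IsHermitian

variable {ι : Type*} [Fintype ι] [DecidableEq ι]

theorem exists_isHermitian_eq_smul_add_smul {M N : Matrix ι ι ℝ} (hM : M.IsHermitian)
    (hN : N.IsHermitian) {t : ℝ} (ht : t < 1) (h : ‖M - t • N‖ ≤ 1 - t) :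
    ∃ (B : Matrix ι ι ℝ) (hB : B.IsHermitian),
      (∀ i, hB.eigenvalues i ≤ 1) ∧ M = (1 - t) • B + t • N := by
  have ht' : 0 < 1 - t := sub_pos.mpr ht
  have hB : ((1 - t)⁻¹ • (M - t • N)).IsHermitian :=
    (hM.sub (hN.smul (IsSelfAdjoint.all t))).smul (IsSelfAdjoint.all _)
  refine ⟨_, hB, fun i => (hB.eigenvalues_le_l2_opNorm i).trans ?_, ?_⟩
  · rw [norm_smul, Real.norm_of_nonneg (inv_nonneg.mpr ht'.le)]
    exact inv_mul_le_one_of_le₀ h ht'.le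
  · rw [smul_smul, mul_inv_cancel₀ ht'.ne', one_smul, sub_add_cancel]

theorem kthLargest_le_of_eq_smul_add_smul {n : ℕ} {M B N : Matrix (Fin n) (Fin n) ℝ}
    (hM : M.IsHermitian) (hB : B.IsHermitian) (hN : N.IsHermitian)
    (hB1 : ∀ i, hB.eigenvalues i ≤ 1) {t : ℝ} (ht0 : 0 ≤ t) (ht1 : t ≤ 1)
    (hMBN : M = (1 - t) • B + t • N) (j : Fin n) :
    kthLargest hM.eigenvalues j ≤ 1 - t + t * kthLargest hN.eigenvalues j := by
  suffices kthLargest hM.eigenvalues j ≤ t * kthLargest hN.eigenvalues j + (1 - t) by linarith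
  refine kthLargest_le_of_inner_map_self_le _ _ hM.toEuclideanLin_eigenvectorBasis
    hN.toEuclideanLin_eigenvectorBasis ht0 (fun x => ?_) j
  have hBx : ⟪x, toEuclideanLin B x⟫ ≤ 1 * ‖x‖ ^ 2 :=
    hB.eigenvectorBasis.inner_map_self_le hB.toEuclideanLin_eigenvectorBasis fun i _ => hB1 i
  rw [hMBN]
  simp only [map_add, map_smul, LinearMap.add_apply, LinearMap.smul_apply, inner_add_right,
    real_inner_smul_right]
  nlinarith

end Matrix.IsHermitian

theorem cube_decomposition_and_eigenvalue_bound_general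
    {n : ℕ} (R J B W' P : Matrix (Fin n) (Fin n) ℝ)
    (hRsymm : R.IsHermitian) (hRinv : R * R = 1)
    (hJ : J.IsHermitian) (hB : B.IsHermitian)
    (hJnorm : ∀ i, |hJ.eigenvalues i| ≤ 1)
    (hBnorm : ∀ i, |hB.eigenvalues i| ≤ 1)
    (δ : ℝ) (hδ0 : 0 ≤ δ) (hδ1 : δ < 1)
    (hW' : W' = (2 : ℝ)⁻¹ •
      ((2 : ℝ)⁻¹ • ((1 : Matrix (Fin n) (Fin n) ℝ) + R) + δ • J + (1 - δ) • B))
    (hP : P = (2 : ℝ)⁻¹ • (J * ((1 : Matrix (Fin n) (Fin n) ℝ) + R) * J))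
    (hW3 : (W' ^ 3).IsHermitian) (hPh : P.IsHermitian) :
    (∃ (B' : Matrix (Fin n) (Fin n) ℝ) (hB' : B'.IsHermitian),
      (∀ i, hB'.eigenvalues i ≤ 1) ∧
      W' ^ 3 = (1 - δ ^ 2 / 8) • B' + (δ ^ 2 / 8) • P) ∧
    ∀ j : Fin n, kthLargest hW3.eigenvalues j
      ≤ 1 - δ ^ 2 / 8 + (δ ^ 2 / 8) * kthLargest hPh.eigenvalues j := by
  set X : Matrix (Fin n) (Fin n) ℝ := (4 : ℝ)⁻¹ • (1 + R)
  set Y : Matrix (Fin n) (Fin n) ℝ := (δ / 2) • J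
  set Z : Matrix (Fin n) (Fin n) ℝ := ((1 - δ) / 2) • B
  have hW'XYZ : W' = X + Y + Z := by rw [hW']; module
  have hYXY : Y * X * Y = (δ ^ 2 / 8) • P := by
    rw [hP]
    simp only [X, Y, smul_mul_assoc, mul_smul_comm, smul_smul]
    ring_nf
  have hX : ‖X‖ ≤ 1 / 2 := by
    have hone := Matrix.l2_opNorm_le_one_of_conjTranspose_mul_self_eq_one
      (A := (1 : Matrix (Fin n) (Fin n) ℝ)) (by simp)
    have hR := Matrix.l2_opNorm_le_one_of_conjTranspose_mul_self_eq_one (by rwa [hRsymm.eq])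
    rw [norm_smul, Real.norm_of_nonneg (by norm_num)]
    linarith [norm_add_le (1 : Matrix (Fin n) (Fin n) ℝ) R]
  have hY : ‖Y‖ ≤ δ / 2 := by
    rw [norm_smul, Real.norm_of_nonneg (by linarith)]
    exact mul_le_of_le_one_right (by linarith) (hJ.l2_opNorm_le zero_le_one hJnorm)
  have hZ : ‖Z‖ ≤ (1 - δ) / 2 := by
    rw [norm_smul, Real.norm_of_nonneg (by linarith)]
    exact mul_le_of_le_one_right (by linarith) (hB.l2_opNorm_le zero_le_one hBnorm)
  have hcube := norm_add_add_pow_three_sub_mul_mul_le hX hY hZ (by ring)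
  rw [← hW'XYZ, hYXY] at hcube
  obtain ⟨B', hB', hB'1, hdecomp⟩ :=
    hW3.exists_isHermitian_eq_smul_add_smul hPh (t := δ ^ 2 / 8) (by nlinarith)
      (by linarith)
  exact ⟨⟨B', hB', hB'1, hdecomp⟩,
    hW3.kthLargest_le_of_eq_smul_add_smul hB' hPh hB'1 (by positivity) (by nlinarith) hdecomp⟩

/-- If `W' = (1/2)((I+R)/2 + δJ + (1−δ)B)` where `R` is symmetric with `R² = I`
(the permutation matrix of an involution), `J` and `B` are symmetric contractions
in spectral norm (all eigenvalues in `[-1,1]`, in particular `η₁(B) ≤ 1`), and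
`0 ≤ δ < 1`, then `W'³ = (1 − δ²/8)·B' + (δ²/8)·P` for some symmetric `B'` with
`η₁(B') ≤ 1`, where `P := (1/2)J(I+R)J`.  Consequently
`η_j(W'³) ≤ 1 − δ²/8 + (δ²/8)·η_j(P)` for all `j`. -/
theorem cube_decomposition_and_eigenvalue_bound
    {n : ℕ} (R J B W' P : Matrix (Fin n) (Fin n) ℝ)
    (hRsymm : R.IsHermitian) (hRinv : R * R = 1)
    (hJ : J.IsHermitian) (hB : B.IsHermitian)
    (hJnorm : ∀ i, |hJ.eigenvalues i| ≤ 1)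
    (hBnorm : ∀ i, |hB.eigenvalues i| ≤ 1)
    (hBtop : ∀ i, hB.eigenvalues i ≤ 1)
    (δ : ℝ) (hδ0 : 0 ≤ δ) (hδ1 : δ < 1)
    (hW' : W' = (2 : ℝ)⁻¹ •
      ((2 : ℝ)⁻¹ • ((1 : Matrix (Fin n) (Fin n) ℝ) + R) + δ • J + (1 - δ) • B))
    (hP : P = (2 : ℝ)⁻¹ • (J * ((1 : Matrix (Fin n) (Fin n) ℝ) + R) * J))
    (hW3 : (W' ^ 3).IsHermitian) (hPh : P.IsHermitian) :
    (∃ (B' : Matrix (Fin n) (Fin n) ℝ) (hB' : B'.IsHermitian),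
      (∀ i, hB'.eigenvalues i ≤ 1) ∧
      W' ^ 3 = (1 - δ ^ 2 / 8) • B' + (δ ^ 2 / 8) • P) ∧
    ∀ j : Fin n, kthLargest hW3.eigenvalues j
      ≤ 1 - δ ^ 2 / 8 + (δ ^ 2 / 8) * kthLargest hPh.eigenvalues j :=
  cube_decomposition_and_eigenvalue_bound_general R J B W' P hRsymm hRinv hJ hB hJnorm hBnorm δ hδ0
    hδ1 hW' hP hW3 hPh
end
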